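/- arXiv:2311.15501 — 2 statements merged into one kernel-verified Lean document; each statement's English description precedes it below -/
import Mathlib

section
/- The largest eigenvalue λ_1 of the adjacency matrix of the signed graph Γ_{1,r-2} on n vertices is the largest root of the cubic polynomial f(x) = x³ + (3-n)x² + (3-n-r)x + (n+4)r - (r² + n + 7). -/
/-!
The vertex classes `{0}`, `{1}`, `{2, …, r-1}`, `{r, …, n-1}` form an equitable partition of
`Γ_{1,r-2}` with quotient matrix `Q_1`, and `det (Q_1 - x) = (x + 1) f(x)`. Lifting eigenvectors of
`Q_1` shows that every root of `f` is an eigenvalue of `Γ_{1,r-2}`. Conversely, two vertices of the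
same class are adjacent twins, so an eigenvector for an eigenvalue `μ ≠ -1` is constant on the
classes and descends to `Q_1`, whence `f(μ) = 0`. Finally `f(r-2) ≤ 0 ≤ f(n)`, so `f` has a root
above `-1`, and the largest eigenvalue is therefore the largest root of `f`.
-/

open Matrix BigOperators

/-- `A` is the adjacency matrix of a signed graph: symmetric, zero diagonal,
entries in `{0, 1, -1}`. -/
def IsSignedAdj {n : ℕ} (A : Matrix (Fin n) (Fin n) ℝ) : Prop :=
  (∀ i j, A i j = A j i) ∧ (∀ i, A i i = 0) ∧ (∀ i j, A i j = 0 ∨ A i j = 1 ∨ A i j = -1)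

/-- The underlying simple graph of the signed graph with adjacency matrix `A`. -/
def graphOf {n : ℕ} (A : Matrix (Fin n) (Fin n) ℝ) : SimpleGraph (Fin n) where
  Adj i j := i ≠ j ∧ A i j ≠ 0 ∧ A j i ≠ 0
  symm := ⟨by intro i j h; exact ⟨h.1.symm, h.2.2, h.2.1⟩⟩
  loopless := ⟨by intro i h; exact h.1 rfl⟩

/-- The sign of a walk: the product of the signs of its edges. -/
def walkSign {n : ℕ} (A : Matrix (Fin n) (Fin n) ℝ) {G : SimpleGraph (Fin n)}
    {u v : Fin n} (w : G.Walk u v) : ℝ :=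
  (w.darts.map fun d => A d.fst d.snd).prod

/-- A signed graph is unbalanced if it has a cycle with sign `-1`. -/
def IsUnbalanced {n : ℕ} (A : Matrix (Fin n) (Fin n) ℝ) : Prop :=
  ∃ (u : Fin n) (w : (graphOf A).Walk u u), w.IsCycle ∧ walkSign A w = -1

/-- Every cycle contained in `S` is positive. -/
def IsBalancedOn {n : ℕ} (A : Matrix (Fin n) (Fin n) ℝ) (S : Set (Fin n)) : Prop :=
  ∀ (u : Fin n) (w : (graphOf A).Walk u u), w.IsCycle → (∀ v ∈ w.support, v ∈ S) →
    walkSign A w = 1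

/-- `S` spans a complete subgraph. -/
def IsCompleteOn {n : ℕ} (A : Matrix (Fin n) (Fin n) ℝ) (S : Set (Fin n)) : Prop :=
  ∀ i ∈ S, ∀ j ∈ S, i ≠ j → A i j ≠ 0

/-- `S` spans an unbalanced complete subgraph. -/
def UnbalancedCompleteOn {n : ℕ} (A : Matrix (Fin n) (Fin n) ℝ) (S : Set (Fin n)) : Prop :=
  IsCompleteOn A S ∧ ∃ (u : Fin n) (w : (graphOf A).Walk u u), w.IsCycle ∧
    (∀ v ∈ w.support, v ∈ S) ∧ walkSign A w = -1

/-- The signed graph contains no unbalanced complete subgraph on `k` vertices. -/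
def KminusFree {n : ℕ} (A : Matrix (Fin n) (Fin n) ℝ) (k : ℕ) : Prop :=
  ¬ ∃ S : Finset (Fin n), S.card = k ∧ UnbalancedCompleteOn A ↑S

/-- The largest eigenvalue of `A`. -/
noncomputable def lam1 {n : ℕ} (A : Matrix (Fin n) (Fin n) ℝ) : ℝ :=
  sSup {μ : ℝ | ∃ x : Fin n → ℝ, x ≠ 0 ∧ A.mulVec x = μ • x}

/-- The signed graph `Γ_{1,r-2}`: vertices `1,…,n-1` form an all-positive complete graph,
vertex `0` is joined to vertex `1` by a negative edge and to vertices `2,…,r-1`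
by positive edges. -/
def GammaMat (n r : ℕ) : Matrix (Fin n) (Fin n) ℝ :=
  Matrix.of fun i j =>
    if i = j then 0
    else if i.val = 0 then (if j.val = 1 then -1 else if j.val < r then 1 else 0)
    else if j.val = 0 then (if i.val = 1 then -1 else if i.val < r then 1 else 0)
    else 1

section Eigen

variable {ι R : Type*} [Fintype ι]

/-- `lam1 A` is by definition `sSup (eigenvalueSet A)`. -/
def eigenvalueSet [CommRing R] (A : Matrix ι ι R) : Set R :=
  {μ | ∃ x : ι → R, x ≠ 0 ∧ A *ᵥ x = μ • x}

theorem finite_eigenvalueSet [Field R] [DecidableEq ι] (A : Matrix ι ι R) :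
    (eigenvalueSet A).Finite :=
  (Module.End.finite_hasEigenvalue (Matrix.toLin' A)).subset fun _ ⟨x, hx0, hx⟩ =>
    Module.End.hasEigenvalue_of_hasEigenvector
      ⟨Module.End.mem_eigenspace_iff.mpr (by rwa [Matrix.toLin'_apply]), hx0⟩

theorem mem_eigenvalueSet_iff_det_eq_zero [Field R] [DecidableEq ι] (A : Matrix ι ι R) (μ : R) :
    μ ∈ eigenvalueSet A ↔ (A - μ • 1).det = 0 := by
  rw [← Matrix.exists_mulVec_eq_zero_iff]
  simp only [eigenvalueSet, Set.mem_ofPred_eq, Matrix.sub_mulVec, Matrix.smul_mulVec,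
    Matrix.one_mulVec, sub_eq_zero]

/-- Subtracting rows `i` and `k` of `A x = μ x` leaves `(μ - A i i + A i k) (x i - x k) = 0`. -/
theorem eigenvector_apply_eq_of_twins [CommRing R] [IsDomain R] {A : Matrix ι ι R}
    {x : ι → R} {μ : R} (hx : A *ᵥ x = μ • x) {i k : ι} (hik : i ≠ k)
    (hrow : ∀ j, j ≠ i → j ≠ k → A i j = A k j) (hdiag : A i i = A k k)
    (hoff : A i k = A k i) (hμ : μ ≠ A i i - A i k) : x i = x k := by
  have hdiff : μ * (x i - x k) = (A i i - A i k) * (x i - x k) := by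
    calc μ * (x i - x k) = (A *ᵥ x) i - (A *ᵥ x) k := by simp [hx, mul_sub]
      _ = ∑ j, (A i j - A k j) * x j := by
        simp only [Matrix.mulVec, dotProduct, ← Finset.sum_sub_distrib, sub_mul]
      _ = (A i i - A k i) * x i + (A i k - A k k) * x k :=
        Fintype.sum_eq_add i k hik fun j ⟨hji, hjk⟩ => by rw [hrow j hji hjk, sub_self, zero_mul]
      _ = (A i i - A i k) * (x i - x k) := by rw [← hdiag, ← hoff]; ring
  have hprod : (μ - (A i i - A i k)) * (x i - x k) = 0 := by rw [sub_mul, hdiff, sub_self]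
  exact sub_eq_zero.mp ((mul_eq_zero.mp hprod).resolve_left (sub_ne_zero.mpr hμ))

end Eigen

section Quotient

variable {ι κ R : Type*} [Fintype ι] [Fintype κ] [CommRing R] {A : Matrix ι ι R}
  {Q : Matrix κ κ R} {c : ι → κ}

theorem eigenvalueSet_subset_of_quotient (hc : c.Surjective)
    (hAQ : ∀ v : κ → R, A *ᵥ (v ∘ c) = (Q *ᵥ v) ∘ c) :
    eigenvalueSet Q ⊆ eigenvalueSet A := by
  rintro μ ⟨v, hv0, hv⟩
  refine ⟨v ∘ c, fun h => hv0 (funext fun k => ?_), by rw [hAQ, hv]; rfl⟩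
  obtain ⟨i, rfl⟩ := hc k
  exact congrFun h i

theorem mem_eigenvalueSet_quotient_of_factorsThrough (hc : c.Surjective)
    (hAQ : ∀ v : κ → R, A *ᵥ (v ∘ c) = (Q *ᵥ v) ∘ c) {x : ι → R} {μ : R} (hx0 : x ≠ 0)
    (hx : A *ᵥ x = μ • x) (hfac : x.FactorsThrough c) : μ ∈ eigenvalueSet Q := by
  set v := Function.extend c x 0
  have hxv : v ∘ c = x := funext (hfac.extend_apply 0)
  refine ⟨v, fun hv => hx0 (by rw [← hxv, hv]; rfl), funext fun k => ?_⟩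
  obtain ⟨i, rfl⟩ := hc k
  have := congrFun (hAQ v) i
  rw [hxv, hx] at this
  simpa [← hxv] using this.symm

end Quotient

theorem isGreatest_csSup_of_subset_insert {α : Type*} [ConditionallyCompleteLinearOrder α]
    {E Z : Set α} {a z : α} (hE : E.Finite) (hZE : Z ⊆ E) (hEZ : E ⊆ insert a Z)
    (hz : z ∈ Z) (haz : a < z) : IsGreatest Z (sSup E) := by
  have hsup : sSup E ∈ E := Set.Nonempty.csSup_mem ⟨z, hZE hz⟩ hE
  have hzsup : z ≤ sSup E := le_csSup hE.bddAbove (hZE hz)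
  refine ⟨(hEZ hsup).resolve_left (haz.trans_le hzsup).ne', fun w hw => ?_⟩
  exact le_csSup hE.bddAbove (hZE hw)

def vertexClass (r t : ℕ) : Fin 4 :=
  if t = 0 then 0 else if t = 1 then 1 else if t < r then 2 else 3

def signPattern : Matrix (Fin 4) (Fin 4) ℝ := !![0, -1, 1, 0; -1, 1, 1, 1; 1, 1, 1, 1; 0, 1, 1, 1]

/-- The quotient matrix `Q_1`: entry `(c, d)` is the total sign of the edges from a vertex of
class `c` to the vertices of class `d`. -/
def quotientMat (n r : ℕ) : Matrix (Fin 4) (Fin 4) ℝ :=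
  !![0, -1, (r : ℝ) - 2, 0; -1, 0, (r : ℝ) - 2, (n : ℝ) - r; 1, 1, (r : ℝ) - 3, (n : ℝ) - r;
    0, 1, (r : ℝ) - 2, (n : ℝ) - r - 1]

def cubic (n r : ℕ) (x : ℝ) : ℝ :=
  x ^ 3 + (3 - (n : ℝ)) * x ^ 2 + (3 - (n : ℝ) - (r : ℝ)) * x
    + ((n : ℝ) + 4) * (r : ℝ) - ((r : ℝ) ^ 2 + (n : ℝ) + 7)

section Gamma

variable {n r : ℕ}

theorem gammaMat_apply_self (i : Fin n) : GammaMat n r i i = 0 := by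
  simp [GammaMat]

theorem gammaMat_apply_of_ne {i j : Fin n} (hij : i ≠ j) :
    GammaMat n r i j = signPattern (vertexClass r i) (vertexClass r j) := by
  have hv : i.val ≠ j.val := Fin.val_ne_of_ne hij
  unfold GammaMat vertexClass
  simp only [Matrix.of_apply, if_neg hij]
  split_ifs <;> simp_all [signPattern]

theorem vertexClass_surjective (hr : 3 ≤ r) (hrn : r < n) :
    (fun i : Fin n => vertexClass r i).Surjective := by
  intro c
  fin_cases c
  · exact ⟨⟨0, by omega⟩, by simp [vertexClass]⟩
  · exact ⟨⟨1, by omega⟩, by simp [vertexClass]⟩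
  · exact ⟨⟨2, by omega⟩, by simp [vertexClass, show 2 < r by omega]⟩
  · exact ⟨⟨r, hrn⟩, by
    simp [vertexClass, show r ≠ 0 by omega, show r ≠ 1 by omega]⟩

theorem sum_comp_vertexClass (hr : 3 ≤ r) (hrn : r < n) (g : Fin 4 → ℝ) :
    ∑ j : Fin n, g (vertexClass r j) = g 0 + g 1 + ((r : ℝ) - 2) * g 2 + ((n : ℝ) - r) * g 3 := by
  have hmid : ∀ t ∈ Finset.Ico 2 r, g (vertexClass r t) = g 2 := fun t ht => by
    rw [Finset.mem_Ico] at ht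
    rw [vertexClass, if_neg (by omega), if_neg (by omega), if_pos ht.2]
  have hout : ∀ t ∈ Finset.Ico r n, g (vertexClass r t) = g 3 := fun t ht => by
    rw [Finset.mem_Ico] at ht
    rw [vertexClass, if_neg (by omega), if_neg (by omega), if_neg (by omega)]
  rw [Fin.sum_univ_eq_sum_range (fun t => g (vertexClass r t)),
    ← Finset.sum_range_add_sum_Ico _ hrn.le, ← Finset.sum_range_add_sum_Ico _ (by omega : 2 ≤ r),
    Finset.sum_congr rfl hmid, Finset.sum_congr rfl hout]
  simp [Finset.sum_range_succ, vertexClass, Nat.cast_sub (by omega : 2 ≤ r),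
    Nat.cast_sub hrn.le]

theorem gammaMat_mulVec_comp (hr : 3 ≤ r) (hrn : r < n) (v : Fin 4 → ℝ) :
    GammaMat n r *ᵥ (fun j : Fin n => v (vertexClass r j))
      = fun i : Fin n => (quotientMat n r *ᵥ v) (vertexClass r i) := by
  funext i
  have hentry : ∀ j : Fin n, GammaMat n r i j * v (vertexClass r j)
      = signPattern (vertexClass r i) (vertexClass r j) * v (vertexClass r j)
        - if j = i then signPattern (vertexClass r i) (vertexClass r i) * v (vertexClass r i)
          else 0 := by
    intro j
    by_cases h : j = i
    · subst h; simp [gammaMat_apply_self]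
    · simp [gammaMat_apply_of_ne (Ne.symm h), h]
  simp only [Matrix.mulVec, dotProduct]
  rw [Finset.sum_congr rfl fun j _ => hentry j, Finset.sum_sub_distrib, Finset.sum_ite_eq',
    if_pos (Finset.mem_univ i),
    sum_comp_vertexClass hr hrn fun k => signPattern (vertexClass r i) k * v k]
  generalize vertexClass r i = c
  fin_cases c <;> simp [quotientMat, signPattern, Fin.sum_univ_four] <;> ring

theorem det_quotientMat_sub_smul (μ : ℝ) :
    (quotientMat n r - μ • 1).det = (μ + 1) * cubic n r μ := by
  rw [Matrix.det_succ_row_zero]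
  simp [Fin.sum_univ_succ, Matrix.det_fin_three, Matrix.submatrix, Fin.succAbove, quotientMat,
    Matrix.one_apply, cubic]
  ring

/-- Classes `0` and `1` are singletons; the other two classes span positive cliques. -/
theorem signPattern_self_of_vertexClass_eq {i k : Fin n} (hik : i ≠ k)
    (h : vertexClass r i = vertexClass r k) :
    signPattern (vertexClass r i) (vertexClass r i) = 1 := by
  have hv : i.val ≠ k.val := Fin.val_ne_of_ne hik
  unfold vertexClass at h ⊢
  split_ifs at h ⊢ <;> first | rfl | omega

theorem factorsThrough_vertexClass_of_mulVec_eq_smul {x : Fin n → ℝ} {μ : ℝ}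
    (hx : GammaMat n r *ᵥ x = μ • x) (hμ : μ ≠ -1) :
    x.FactorsThrough fun i : Fin n => vertexClass r i := by
  intro i k (hik : vertexClass r i = vertexClass r k)
  by_cases hik' : i = k
  · rw [hik']
  have hself := signPattern_self_of_vertexClass_eq hik' hik
  refine eigenvector_apply_eq_of_twins hx hik' (fun j hji hjk => ?_) ?_ ?_ ?_
  · rw [gammaMat_apply_of_ne (Ne.symm hji), gammaMat_apply_of_ne (Ne.symm hjk), hik]
  · rw [gammaMat_apply_self, gammaMat_apply_self]
  · rw [gammaMat_apply_of_ne hik', gammaMat_apply_of_ne (Ne.symm hik'), hik]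
  · rwa [gammaMat_apply_self, gammaMat_apply_of_ne hik', ← hik, hself, zero_sub]

theorem cubic_roots_subset_eigenvalueSet (hr : 3 ≤ r) (hrn : r < n) :
    {x | cubic n r x = 0} ⊆ eigenvalueSet (GammaMat n r) := fun μ hμ =>
  eigenvalueSet_subset_of_quotient (vertexClass_surjective hr hrn) (gammaMat_mulVec_comp hr hrn)
    ((mem_eigenvalueSet_iff_det_eq_zero _ μ).mpr (by
      rw [det_quotientMat_sub_smul, show cubic n r μ = 0 from hμ, mul_zero]))

theorem eigenvalueSet_subset_insert_cubic_roots (hr : 3 ≤ r) (hrn : r < n) :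
    eigenvalueSet (GammaMat n r) ⊆ insert (-1) {x | cubic n r x = 0} := by
  rintro μ ⟨x, hx0, hx⟩
  by_cases hμ : μ = -1
  · exact Or.inl hμ
  have hQ := mem_eigenvalueSet_quotient_of_factorsThrough (vertexClass_surjective hr hrn)
    (gammaMat_mulVec_comp hr hrn) hx0 hx (factorsThrough_vertexClass_of_mulVec_eq_smul hx hμ)
  rw [mem_eigenvalueSet_iff_det_eq_zero, det_quotientMat_sub_smul] at hQ
  exact Or.inr ((mul_eq_zero.mp hQ).resolve_left fun h => hμ (eq_neg_of_add_eq_zero_left h))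

theorem exists_cubic_root_ge (hr : 3 ≤ r) (hrn : r < n) :
    ∃ μ, (r : ℝ) - 2 ≤ μ ∧ cubic n r μ = 0 := by
  have hrR : (3 : ℝ) ≤ r := by exact_mod_cast hr
  have hrnR : (r : ℝ) + 1 ≤ n := by exact_mod_cast hrn
  have hlow : cubic n r (r - 2) ≤ 0 := by
    have h : cubic n r (r - 2) = -((r - 3) * ((r - 1) * (n - r - 1) + 2 * (r - 2))) := by
      unfold cubic; ring
    rw [h, neg_nonpos]
    apply mul_nonneg <;> nlinarith
  have hhigh : 0 ≤ cubic n r n := by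
    have h : cubic n r n = 2 * n ^ 2 - r ^ 2 + 2 * n + 4 * r - 7 := by unfold cubic; ring
    nlinarith
  obtain ⟨μ, hμ, hroot⟩ := intermediate_value_Icc (by linarith : (r : ℝ) - 2 ≤ n)
    (by unfold cubic; fun_prop : Continuous (cubic n r)).continuousOn ⟨hlow, hhigh⟩
  exact ⟨μ, hμ.1, hroot⟩

end Gamma

/-- `λ₁(Γ_{1,r-2})` is the largest root of
`f(x) = x³ + (3-n)x² + (3-n-r)x + (n+4)r - (r²+n+7)`. -/
theorem stmt2 {n r : ℕ} (hr : 3 ≤ r) (hrn : r < n) :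
    IsGreatest {x : ℝ | x ^ 3 + (3 - (n : ℝ)) * x ^ 2 + (3 - (n : ℝ) - (r : ℝ)) * x
        + ((n : ℝ) + 4) * (r : ℝ) - ((r : ℝ) ^ 2 + (n : ℝ) + 7) = 0}
      (lam1 (GammaMat n r)) := by
  obtain ⟨μ, hμr, hμ⟩ := exists_cubic_root_ge hr hrn
  have hr3 : (3 : ℝ) ≤ r := by exact_mod_cast hr
  exact isGreatest_csSup_of_subset_insert (finite_eigenvalueSet _)
    (cubic_roots_subset_eigenvalueSet hr hrn) (eigenvalueSet_subset_insert_cubic_roots hr hrn)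
    hμ (by linarith)
end

section
/- Let Γ be a signed graph on n vertices and x a unit eigenvector corresponding to λ_1(Γ). If λ_1(Γ) > n - k, then x has at most k - 2 zero components. -/
/-!
If `A x = μ x` with `‖x‖ = 1`, then `μ = xᵀ A x ≤ ∑_{i ≠ j} |x i| |x j| = (∑ |x i|)² - 1`, and
by Cauchy–Schwarz over the support of `x` this is at most `s - 1`, where `s` is the number of
nonzero components. Hence `n - k < s - 1`, i.e. the `n - s` zero components number at most `k - 2`.
-/

open Matrix BigOperators

lemma sq_sum_abs_le_ncard_support_mul {ι : Type*} [Fintype ι] (x : ι → ℝ) :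
    (∑ i, |x i|) ^ 2 ≤ (Function.support x).ncard * ∑ i, x i ^ 2 := by
  classical
  set S := Finset.univ.filter (x · ≠ 0)
  have hS : (Function.support x).ncard = S.card := by
    rw [Set.ncard_eq_toFinset_card']; congr; ext; simp [S]
  have habs : ∑ i ∈ S, |x i| = ∑ i, |x i| := Finset.sum_filter_of_ne (by simp)
  have hsq : ∑ i ∈ S, x i ^ 2 = ∑ i, x i ^ 2 := Finset.sum_filter_of_ne (by simp)
  calc (∑ i, |x i|) ^ 2 = (∑ i ∈ S, |x i|) ^ 2 := by rw [habs]
    _ ≤ S.card * ∑ i ∈ S, |x i| ^ 2 := sq_sum_le_card_mul_sum_sq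
    _ = (Function.support x).ncard * ∑ i, x i ^ 2 := by simp only [sq_abs, hsq, hS]

namespace IsSignedAdj

variable {n : ℕ} {A : Matrix (Fin n) (Fin n) ℝ}

lemma abs_le_one (hA : IsSignedAdj A) (i j : Fin n) : |A i j| ≤ 1 := by
  rcases hA.2.2 i j with h | h | h <;> simp [h]

lemma mul_entry_mul_le (hA : IsSignedAdj A) (x : Fin n → ℝ) (i j : Fin n) :
    x i * A i j * x j ≤ |x i| * |x j| - if i = j then x i ^ 2 else 0 := by
  split_ifs with hij
  · subst hij
    simp [hA.2.1 i, ← sq]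
  · calc x i * A i j * x j ≤ |x i * A i j * x j| := le_abs_self _
      _ = |A i j| * (|x i| * |x j|) := by rw [abs_mul, abs_mul]; ring
      _ ≤ 1 * (|x i| * |x j|) := by gcongr; exact hA.abs_le_one i j
      _ = |x i| * |x j| - 0 := by ring

lemma dotProduct_mulVec_le_sq_sum_abs (hA : IsSignedAdj A) (x : Fin n → ℝ) :
    x ⬝ᵥ A *ᵥ x ≤ (∑ i, |x i|) ^ 2 - ∑ i, x i ^ 2 := by
  calc x ⬝ᵥ A *ᵥ x = ∑ i, ∑ j, x i * A i j * x j := by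
        simp only [dotProduct, mulVec, Finset.mul_sum, mul_assoc]
    _ ≤ ∑ i, ∑ j, (|x i| * |x j| - if i = j then x i ^ 2 else 0) := by
        gcongr with i _ j _; exact hA.mul_entry_mul_le x i j
    _ = (∑ i, |x i|) ^ 2 - ∑ i, x i ^ 2 := by
        simp [Finset.sum_sub_distrib, sq, Finset.sum_mul_sum]

lemma le_ncard_support_sub_one_of_mulVec_eq (hA : IsSignedAdj A) {x : Fin n → ℝ} {μ : ℝ}
    (hx : ∑ i, x i ^ 2 = 1) (hμ : A *ᵥ x = μ • x) : μ ≤ (Function.support x).ncard - 1 := by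
  have hquad : x ⬝ᵥ A *ᵥ x = μ := by
    rw [hμ, dotProduct_smul, smul_eq_mul, dotProduct]
    simp only [← sq, hx, mul_one]
  have hform := hA.dotProduct_mulVec_le_sq_sum_abs x
  have hcs := sq_sum_abs_le_ncard_support_mul x
  rw [hx] at hform hcs
  linarith

end IsSignedAdj

/-- If `λ₁(Γ) > n - k`, then a unit eigenvector for `λ₁` has at most `k - 2`
zero components. -/
theorem stmt10 {n k : ℕ} (A : Matrix (Fin n) (Fin n) ℝ) (x : Fin n → ℝ)
    (hA : IsSignedAdj A) (hxu : ∑ i, x i ^ 2 = 1)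
    (heig : A.mulVec x = lam1 A • x) (hgt : (n : ℝ) - (k : ℝ) < lam1 A) :
    {i | x i = 0}.ncard ≤ k - 2 := by
  have hlam := hA.le_ncard_support_sub_one_of_mulVec_eq hxu heig
  have hzero : {i | x i = 0} = (Function.support x)ᶜ := by ext; simp
  have hcount : (Function.support x).ncard + {i | x i = 0}.ncard = n := by
    rw [hzero, Set.ncard_add_ncard_compl, Nat.card_eq_fintype_card, Fintype.card_fin]
  have hcountℝ : ((Function.support x).ncard : ℝ) + {i | x i = 0}.ncard = n := by
    exact_mod_cast hcount
  have hltℝ : ({i | x i = 0}.ncard : ℝ) + 1 < k := by linarith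
  have hlt : {i | x i = 0}.ncard + 1 < k := by exact_mod_cast hltℝ
  omega
end
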